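/- arXiv:math-ph/0209052 — 3 statements merged into one kernel-verified Lean document; each statement's English description precedes it below -/
import Mathlib

section
/- Let 𝔤 be a finite-dimensional real Lie algebra equipped with a positive-definite invariant symmetric bilinear form B, and suppose 𝔤 is perfect, i.e. ⁅𝔤,𝔤⁆ = 𝔤. Then the Killing form of 𝔤 is negative definite; in particular, 𝔤 is a semisimple Lie algebra of compact type. -/
/-!
Invariance of `B` makes every `ad x` skew-adjoint, so in a `B`-orthogonal basis `(eᵢ)`
`κ(x, x) = tr (ad x ∘ ad x) = -∑ B(⁅x, eᵢ⁆, ⁅x, eᵢ⁆) / B(eᵢ, eᵢ)`, which is negative unless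
`ad x = 0`. A central `x` is `B`-orthogonal to `⁅𝔤, 𝔤⁆ = 𝔤`, hence zero. A negative-definite
Killing form is nondegenerate, which gives semisimplicity.
-/

open LinearMap (BilinForm)

section OrthogonalBasis

variable {K V ι : Type*} [Field K] [AddCommGroup V] [Module K V] [Fintype ι]
  {B : BilinForm K V} {v : Module.Basis ι K V}

lemma Module.Basis.repr_apply_eq_div_of_isOrthoᵢ (hv : B.IsOrthoᵢ v)
    (hvv : ∀ i, B (v i) (v i) ≠ 0) (x : V) (i : ι) :
    v.repr x i = B (v i) x / B (v i) (v i) := by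
  have hBx : B (v i) x = v.repr x i * B (v i) (v i) := by
    conv_lhs => rw [← v.sum_repr x]
    rw [map_sum, Finset.sum_eq_single i (fun j _ hj => by rw [map_smul, hv hj.symm, smul_zero])
      (by simp), map_smul, smul_eq_mul]
  rw [hBx, mul_div_cancel_right₀ _ (hvv i)]

lemma LinearMap.trace_eq_sum_div_of_isOrthoᵢ (hv : B.IsOrthoᵢ v)
    (hvv : ∀ i, B (v i) (v i) ≠ 0) (f : Module.End K V) :
    LinearMap.trace K V f = ∑ i, B (v i) (f (v i)) / B (v i) (v i) := by
  classical
  simp only [LinearMap.trace_eq_matrix_trace K v, Matrix.trace, Matrix.diag_apply,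
    LinearMap.toMatrix_apply, v.repr_apply_eq_div_of_isOrthoᵢ hv hvv]

end OrthogonalBasis

lemma LinearMap.trace_comp_self_neg_of_isSkewAdjoint {K V : Type*} [Field K] [LinearOrder K]
    [IsStrictOrderedRing K] [AddCommGroup V] [Module K V] [FiniteDimensional K V]
    {B : BilinForm K V} (hB : LinearMap.IsSymm B) (hpos : ∀ x, x ≠ 0 → 0 < B x x)
    {T : Module.End K V} (hT : B.IsSkewAdjoint T) (hT0 : T ≠ 0) :
    LinearMap.trace K V (T ∘ₗ T) < 0 := by
  let _ := invertibleOfNonzero (two_ne_zero : (2 : K) ≠ 0)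
  obtain ⟨v, hv⟩ := BilinForm.exists_orthogonal_basis hB
  have hvv : ∀ i, 0 < B (v i) (v i) := fun i => hpos _ (v.ne_zero i)
  have hnonneg : ∀ x, 0 ≤ B x x := fun x => by
    rcases eq_or_ne x 0 with rfl | hx
    · simp
    · exact (hpos x hx).le
  have hTv : ∃ i, T (v i) ≠ 0 := by
    by_contra! h
    exact hT0 (v.ext fun i => by simpa using h i)
  have hskew : ∀ i, B (v i) (T (T (v i))) = -B (T (v i)) (T (v i)) := fun i => by
    rw [hT (v i) (T (v i)), Pi.neg_apply, map_neg, neg_neg]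
  rw [LinearMap.trace_eq_sum_div_of_isOrthoᵢ hv (fun i => (hvv i).ne'), ← neg_pos,
    ← Finset.sum_neg_distrib]
  refine Finset.sum_pos' (fun i _ => ?_) ?_
  · simp only [LinearMap.comp_apply, hskew, neg_div, neg_neg]
    exact div_nonneg (hnonneg _) (hvv i).le
  · obtain ⟨i, hi⟩ := hTv
    refine ⟨i, Finset.mem_univ i, ?_⟩
    simp only [LinearMap.comp_apply, hskew, neg_div, neg_neg]
    exact div_pos (hpos _ hi) (hvv i)

namespace LieAlgebra

variable {R L : Type*} [CommRing R] [LieRing L] [LieAlgebra R L] {B : L →ₗ[R] L →ₗ[R] R}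

lemma isSkewAdjoint_ad_of_invariant (hinv : ∀ x y z : L, B ⁅x, y⁆ z = B x ⁅y, z⁆) (x : L) :
    LinearMap.IsSkewAdjoint B (ad R L x) := fun a b => by
  rw [ad_apply, ← lie_skew, map_neg, LinearMap.neg_apply, hinv, Pi.neg_apply, map_neg, ad_apply]

lemma invariantForm_apply_eq_zero_of_ad_eq_zero (hinv : ∀ x y z : L, B ⁅x, y⁆ z = B x ⁅y, z⁆)
    (hperfect : ⁅(⊤ : LieIdeal R L), (⊤ : LieIdeal R L)⁆ = ⊤) {z : L} (hz : ad R L z = 0)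
    (y : L) : B z y = 0 := by
  suffices h : ⁅(⊤ : LieIdeal R L), (⊤ : LieIdeal R L)⁆.toSubmodule ≤ LinearMap.ker (B z) by
    exact h (by simp [hperfect])
  rw [LieSubmodule.lieIdeal_oper_eq_linear_span, Submodule.span_le]
  rintro _ ⟨a, b, rfl⟩
  rw [SetLike.mem_coe, LinearMap.mem_ker, ← hinv, ← ad_apply R, hz, LinearMap.zero_apply, map_zero,
    LinearMap.zero_apply]

lemma isKilling_of_killingForm_self_ne_zero (h : ∀ x : L, x ≠ 0 → killingForm R L x x ≠ 0) :
    IsKilling R L :=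
  ⟨(LieSubmodule.eq_bot_iff _).mpr fun x hx => by
    by_contra hx0
    exact h x hx0 (hx x trivial)⟩

end LieAlgebra

/-- A perfect finite-dimensional real Lie algebra with a positive-definite
invariant symmetric bilinear form has negative-definite Killing form; in
particular it is a semisimple Lie algebra of compact type. -/
theorem killing_negdef_of_perfect
    (L : Type*) [LieRing L] [LieAlgebra ℝ L] [FiniteDimensional ℝ L]
    (B : L →ₗ[ℝ] L →ₗ[ℝ] ℝ)
    (hsymm : ∀ x y : L, B x y = B y x)
    (hinv : ∀ x y z : L, B ⁅x, y⁆ z = B x ⁅y, z⁆)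
    (hpos : ∀ x : L, x ≠ 0 → 0 < B x x)
    (hperfect : ⁅(⊤ : LieIdeal ℝ L), (⊤ : LieIdeal ℝ L)⁆ = ⊤) :
    (∀ x : L, x ≠ 0 → killingForm ℝ L x x < 0) ∧ LieAlgebra.IsSemisimple ℝ L := by
  have hneg : ∀ x : L, x ≠ 0 → killingForm ℝ L x x < 0 := fun x hx =>
    LinearMap.trace_comp_self_neg_of_isSkewAdjoint ⟨hsymm⟩ hpos
      (LieAlgebra.isSkewAdjoint_ad_of_invariant hinv x) fun had => (hpos x hx).ne'
        (LieAlgebra.invariantForm_apply_eq_zero_of_ad_eq_zero hinv hperfect had x)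
  have : LieAlgebra.IsKilling ℝ L :=
    LieAlgebra.isKilling_of_killingForm_self_ne_zero fun x hx => (hneg x hx).ne
  exact ⟨hneg, inferInstance⟩
end

section
/- Let 𝔤 be a finite-dimensional real Lie algebra equipped with a positive-definite invariant symmetric bilinear form B. Then the derived algebra ⁅𝔤,𝔤⁆, regarded as a Lie algebra in its own right, is semisimple. -/
/-!
Let `I = ⁅L, L⁆`. Its orthogonal complement `O` for `B` is an ideal with `⁅L, O⁆ ≤ I ⊓ O = 0`,
and positivity makes `O` a vector-space complement of `I`; hence `⁅L, L⁆ = ⁅I, I⁆`, i.e. `I` is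
perfect. On `I` the restricted form is still positive definite and invariant. An abelian ideal
is then central, since `B ⁅x, y⁆ ⁅x, y⁆ = -B y ⁅x, ⁅x, y⁆⁆ = 0`, and the centre is orthogonal to
`⁅I, I⁆ = I`, hence zero. Dieudonné's criterion (a nondegenerate invariant form and no nonzero
abelian ideals) now gives semisimplicity.
-/

theorem LinearMap.BilinForm.lieInvariant_of_apply_lie_eq {R L : Type*} [CommRing R] [LieRing L]
    [LieAlgebra R L] {B : L →ₗ[R] L →ₗ[R] R} (hinv : ∀ x y z : L, B ⁅x, y⁆ z = B x ⁅y, z⁆) :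
    LinearMap.BilinForm.lieInvariant L B := fun x y z => by
  rw [← lie_skew, map_neg, LinearMap.neg_apply, hinv]

theorem LieIdeal.derived_eq_top_of_lie_self_eq_self {R L : Type*} [CommRing R] [LieRing L]
    [LieAlgebra R L] {I : LieIdeal R L} (h : ⁅I, I⁆ = I) :
    ⁅(⊤ : LieIdeal R I), (⊤ : LieIdeal R I)⁆ = ⊤ := by
  simpa [h] using LieIdeal.derivedSeries_eq_derivedSeriesOfIdeal_comap I 1

namespace LieAlgebra

open LinearMap.BilinForm

section CommRing

variable {R L : Type*} [CommRing R] [LieRing L] [LieAlgebra R L] {B : L →ₗ[R] L →ₗ[R] R}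

theorem le_center_of_isLieAbelian (hB : ∀ x : L, B x x = 0 → x = 0)
    (hinv : ∀ x y z : L, B ⁅x, y⁆ z = B x ⁅y, z⁆) (I : LieIdeal R L) [IsLieAbelian I] :
    I ≤ center R L := by
  intro x hx
  rw [LieModule.mem_maxTrivSubmodule]
  intro y
  have hcomm : ⁅x, ⁅x, y⁆⁆ = 0 := by
    simpa using congrArg Subtype.val
      (trivial_lie_zero I I (⟨x, hx⟩ : I) ⟨_, lie_mem_left R L I x y hx⟩)
  rw [← lie_skew, neg_eq_zero]
  apply hB
  rw [lieInvariant_of_apply_lie_eq hinv, hcomm, map_zero, neg_zero]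

theorem derived_le_orthogonal_center (hinv : ∀ x y z : L, B ⁅x, y⁆ z = B x ⁅y, z⁆) :
    ⁅(⊤ : LieIdeal R L), (⊤ : LieIdeal R L)⁆ ≤
      InvariantForm.orthogonal B (lieInvariant_of_apply_lie_eq hinv) (center R L) := by
  rw [LieSubmodule.lieIdeal_oper_eq_span, LieSubmodule.lieSpan_le]
  rintro _ ⟨x, y, rfl⟩
  rw [SetLike.mem_coe, InvariantForm.mem_orthogonal]
  intro z hz
  rw [← hinv, ← lie_skew, (LieModule.mem_maxTrivSubmodule R L L z).mp hz, neg_zero, map_zero,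
    LinearMap.zero_apply]

theorem center_eq_bot_of_derived_eq_top (hB : ∀ x : L, B x x = 0 → x = 0)
    (hinv : ∀ x y z : L, B ⁅x, y⁆ z = B x ⁅y, z⁆)
    (hperf : ⁅(⊤ : LieIdeal R L), (⊤ : LieIdeal R L)⁆ = ⊤) :
    center R L = ⊥ := by
  refine eq_bot_iff.2 fun z hz => hB z ?_
  have hz' := derived_le_orthogonal_center hinv (hperf ▸ LieSubmodule.mem_top z)
  exact (InvariantForm.mem_orthogonal _ _ _ _).mp hz' z hz

end CommRing

section Field

variable {K L : Type*} [Field K] [LieRing L] [LieAlgebra K L] [Module.Finite K L]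
  {B : L →ₗ[K] L →ₗ[K] K}

theorem isSemisimple_of_derived_eq_top (hB : ∀ x : L, B x x = 0 → x = 0)
    (hsymm : ∀ x y : L, B x y = B y x) (hinv : ∀ x y z : L, B ⁅x, y⁆ z = B x ⁅y, z⁆)
    (hperf : ⁅(⊤ : LieIdeal K L), (⊤ : LieIdeal K L)⁆ = ⊤) : IsSemisimple K L := by
  refine InvariantForm.isSemisimple_of_nondegenerate B
    ⟨fun x hx => hB x (hx x), fun x hx => hB x (hx x)⟩ (lieInvariant_of_apply_lie_eq hinv)
    (fun x y h => (hsymm y x).trans h) fun I hI _ => hI.1 ?_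
  exact eq_bot_iff.2 <| (le_center_of_isLieAbelian hB hinv I).trans
    (center_eq_bot_of_derived_eq_top hB hinv hperf).le

theorem lie_derived_derived_eq_derived (hB : ∀ x : L, B x x = 0 → x = 0)
    (hsymm : ∀ x y : L, B x y = B y x) (hinv : ∀ x y z : L, B ⁅x, y⁆ z = B x ⁅y, z⁆) :
    ⁅⁅(⊤ : LieIdeal K L), (⊤ : LieIdeal K L)⁆, ⁅(⊤ : LieIdeal K L), (⊤ : LieIdeal K L)⁆⁆ =
      ⁅(⊤ : LieIdeal K L), (⊤ : LieIdeal K L)⁆ := by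
  set I : LieIdeal K L := ⁅(⊤ : LieIdeal K L), (⊤ : LieIdeal K L)⁆
  set O := InvariantForm.orthogonal B (lieInvariant_of_apply_lie_eq hinv) I
  have hdisj : Disjoint I O := by
    rw [← LieSubmodule.disjoint_toSubmodule, Submodule.disjoint_def]
    exact fun x hxI hxO => hB x ((InvariantForm.mem_orthogonal _ _ _ _).mp hxO x hxI)
  have hsup : I ⊔ O = ⊤ := by
    rw [← LieSubmodule.toSubmodule_inj, LieSubmodule.sup_toSubmodule,
      LieSubmodule.top_toSubmodule, InvariantForm.orthogonal_toSubmodule]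
    exact ((isCompl_orthogonal_iff_disjoint (fun x y h => (hsymm y x).trans h)).2
      (LieSubmodule.disjoint_toSubmodule.2 hdisj)).codisjoint.eq_top
  have hO : ∀ J : LieIdeal K L, ⁅J, O⁆ = ⊥ := fun J => eq_bot_iff.2 <|
    (le_inf (LieSubmodule.mono_lie le_top le_top) (LieSubmodule.lie_le_right O J)).trans
      hdisj.le_bot
  refine le_antisymm (LieSubmodule.lie_le_left I I) (le_of_eq ?_)
  calc I = ⁅I ⊔ O, I ⊔ O⁆ := by rw [hsup]
    _ = ⁅I, I⁆ := by
      rw [LieSubmodule.sup_lie, LieSubmodule.lie_sup, LieSubmodule.lie_sup,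
        LieSubmodule.lie_comm O I, hO, hO, sup_bot_eq, bot_sup_eq, sup_bot_eq]

end Field

end LieAlgebra

/-- For a finite-dimensional real Lie algebra with a positive-definite invariant
symmetric bilinear form, the derived algebra, regarded as a Lie algebra in its
own right, is semisimple. -/
theorem derived_algebra_semisimple
    (L : Type*) [LieRing L] [LieAlgebra ℝ L] [FiniteDimensional ℝ L]
    (B : L →ₗ[ℝ] L →ₗ[ℝ] ℝ)
    (hsymm : ∀ x y : L, B x y = B y x)
    (hinv : ∀ x y z : L, B ⁅x, y⁆ z = B x ⁅y, z⁆)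
    (hpos : ∀ x : L, x ≠ 0 → 0 < B x x) :
    LieAlgebra.IsSemisimple ℝ ↥(⁅(⊤ : LieIdeal ℝ L), (⊤ : LieIdeal ℝ L)⁆) := by
  have hB : ∀ x : L, B x x = 0 → x = 0 := fun x hx => by_contra fun h => (hpos x h).ne' hx
  set I : LieIdeal ℝ L := ⁅(⊤ : LieIdeal ℝ L), (⊤ : LieIdeal ℝ L)⁆
  have hperf : ⁅(⊤ : LieIdeal ℝ I), (⊤ : LieIdeal ℝ I)⁆ = ⊤ :=
    LieIdeal.derived_eq_top_of_lie_self_eq_self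
      (LieAlgebra.lie_derived_derived_eq_derived hB hsymm hinv)
  exact LieAlgebra.isSemisimple_of_derived_eq_top
    (B := B.compl₁₂ I.incl.toLinearMap I.incl.toLinearMap)
    (fun x hx => Subtype.ext (hB x hx)) (fun x y => hsymm x y) (fun x y z => hinv x y z) hperf
end

section
/- Let V be a finite-dimensional real inner product space, 𝔤' a real Lie algebra, and b : 𝔤' → End(V) a linear map that is a representation: b(⁅u',v'⁆) = b(u') ∘ b(v') − b(v') ∘ b(u') for all u', v' ∈ 𝔤'. Fix a real constant c and define e^S : 𝔤' → End(V) by e^S(w') := c • b^S(w'). Then for all u', v' ∈ 𝔤' the intertwining identity holds: e^S(⁅u',v'⁆) − [e^S(u'), b^A(v')] − [b^A(u'), e^S(v')] = e^S(u') ∘ b^S(v') + b^S(v') ∘ e^S(u') − b^S(u') ∘ e^S(v') − e^S(v') ∘ b^S(u'). -/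
/-- The symmetric part of an endomorphism of a finite-dimensional real inner
product space: `f^S = (1/2)(f + f*)`. -/
noncomputable def symPart {V : Type*} [NormedAddCommGroup V] [InnerProductSpace ℝ V]
    [FiniteDimensional ℝ V] (f : V →ₗ[ℝ] V) : V →ₗ[ℝ] V :=
  (1 / 2 : ℝ) • (f + LinearMap.adjoint f)

/-- The antisymmetric part of an endomorphism of a finite-dimensional real inner
product space: `f^A = (1/2)(f − f*)`. -/
noncomputable def skewPart {V : Type*} [NormedAddCommGroup V] [InnerProductSpace ℝ V]
    [FiniteDimensional ℝ V] (f : V →ₗ[ℝ] V) : V →ₗ[ℝ] V :=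
  (1 / 2 : ℝ) • (f - LinearMap.adjoint f)

/-- For a representation `b` of a real Lie algebra `𝔤'` on a finite-dimensional
real inner product space and `e^S(w') := c • b^S(w')`, the intertwining identity
(equation (14) of the paper) holds:
`e^S⁅u',v'⁆ − [e^S u', b^A v'] − [b^A u', e^S v']
  = {e^S u', b^S v'} − {b^S u', e^S v'}`. -/
theorem intertwining_identity_scalar_multiple_of_symPart
    (V : Type*) [NormedAddCommGroup V] [InnerProductSpace ℝ V] [FiniteDimensional ℝ V]
    (L' : Type*) [LieRing L'] [LieAlgebra ℝ L']
    (b : L' →ₗ[ℝ] (V →ₗ[ℝ] V))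
    (hrep : ∀ u' v' : L', b ⁅u', v'⁆ = b u' ∘ₗ b v' - b v' ∘ₗ b u')
    (c : ℝ)
    (eS : L' → (V →ₗ[ℝ] V))
    (heS : ∀ w' : L', eS w' = c • symPart (b w')) :
    ∀ u' v' : L',
      eS ⁅u', v'⁆ - (eS u' ∘ₗ skewPart (b v') - skewPart (b v') ∘ₗ eS u')
        - (skewPart (b u') ∘ₗ eS v' - eS v' ∘ₗ skewPart (b u'))
      = eS u' ∘ₗ symPart (b v') + symPart (b v') ∘ₗ eS u'
        - symPart (b u') ∘ₗ eS v' - eS v' ∘ₗ symPart (b u') := by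
  intro u' v'
  simp only [heS, symPart, skewPart, hrep, map_sub, LinearMap.adjoint_comp]
  simp only [← Module.End.mul_eq_comp]
  set A := b u'
  set B := b v'
  set A' := LinearMap.adjoint A
  set B' := LinearMap.adjoint B
  simp only [smul_sub, smul_add, mul_sub, sub_mul, mul_add, add_mul,
    mul_smul_comm, smul_mul_assoc, smul_smul]
  module
end
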